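/- Let H and K be complex Hilbert spaces, let Φ : B(H) → B(K) be a strictly positive linear map with Φ(I) ≤ I, and let A, B ∈ B(H) satisfy 0 < b₁I ≤ A ≤ a₁I and 0 < b₂I ≤ B ≤ a₂I. Let f : (0,∞) → (0,∞) be an operator monotone function with f(1) = 1 and σ the associated operator mean. Then Φ(A)^{1/2} Φ(|A^{−1/2}(A σ B)|²) Φ(A)^{1/2} − |Φ(A)^{−1/2} Φ(A σ B) Φ(A)^{1/2}|² ≤ (a₁²/4)(f(a₂b₁⁻¹) − f(b₂a₁⁻¹))² I. -/

import Mathlib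

/-!
Write `T = A^{-1/2} B A^{-1/2}` and `X = f(T)`, so that `A σ B = A^{1/2} X A^{1/2}`. The bounds on
`A` and `B` give `b₂/a₁ ≤ T ≤ a₂/b₁`, hence `m ≤ X ≤ M` with `m = f(b₂/a₁)`, `M = f(a₂/b₁)` by
operator monotonicity. Since `(M - X)(X - m) ≥ 0`, conjugating by `A^{1/2}` gives
`|A^{-1/2}(A σ B)|² ≤ (M + m)(A σ B) - mM A`, and `Φ` preserves this. With `D = Φ(A)` and
`S = D^{-1/2} Φ(A σ B) D^{-1/2}`, the left-hand side is then at most `D((M + m)S - mM - S²)D`;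
completing the square bounds this by `((M - m)²/4) D²`, and `D² ≤ a₁²` because `Φ(I) ≤ I`.
-/

open scoped InnerProductSpace

noncomputable section

/-- The real power `A ^ r` of a (positive) operator, via the continuous functional calculus. -/
noncomputable def opPow {H : Type} [NormedAddCommGroup H] [InnerProductSpace ℂ H]
    [CompleteSpace H] (A : H →L[ℂ] H) (r : ℝ) : H →L[ℂ] H :=
  cfc (fun t : ℝ => t ^ r) A

/-- The operator mean `A σ B = A^{1/2} f(A^{-1/2} B A^{-1/2}) A^{1/2}` associated with the
representing function `f`. -/
noncomputable def opMean {H : Type} [NormedAddCommGroup H] [InnerProductSpace ℂ H]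
    [CompleteSpace H] (f : ℝ → ℝ) (A B : H →L[ℂ] H) : H →L[ℂ] H :=
  opPow A (1/2) * cfc f (opPow A (-(1/2)) * B * opPow A (-(1/2))) * opPow A (1/2)

/-- The weighted geometric mean `A #_α B = A^{1/2} (A^{-1/2} B A^{-1/2})^α A^{1/2}`. -/
noncomputable def geoMean {H : Type} [NormedAddCommGroup H] [InnerProductSpace ℂ H]
    [CompleteSpace H] (α : ℝ) (A B : H →L[ℂ] H) : H →L[ℂ] H :=
  opMean (fun t : ℝ => t ^ α) A B

/-- `f : (0,∞) → (0,∞)` is operator monotone: for all positive invertible operators `X ≤ Y`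
(on any complex Hilbert space), `f(X) ≤ f(Y)` in the Loewner order. -/
def IsOperatorMonotone (f : ℝ → ℝ) : Prop :=
  ∀ (H : Type) [NormedAddCommGroup H] [InnerProductSpace ℂ H] [CompleteSpace H]
    (X Y : H →L[ℂ] H), 0 ≤ X → IsUnit X → 0 ≤ Y → IsUnit Y → X ≤ Y →
      cfc f X ≤ cfc f Y

open CFC

section StarOrderedAlgebra

variable {R : Type*} [Ring R] [StarRing R] [PartialOrder R] [StarOrderedRing R] [Algebra ℝ R]
  [StarModule ℝ R]

lemma smul_sub_smul_one_sub_mul_self_le {s : R} (hs : IsSelfAdjoint s) (m M : ℝ) :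
    (M + m) • s - (m * M) • 1 - s * s ≤ ((M - m) ^ 2 / 4) • 1 := by
  set t := s - ((M + m) / 2) • (1 : R)
  have ht : IsSelfAdjoint t := hs.sub (.smul (IsSelfAdjoint.all _) (IsSelfAdjoint.one R))
  have hsq : ((M - m) ^ 2 / 4) • (1 : R) - ((M + m) • s - (m * M) • 1 - s * s) = star t * t := by
    rw [ht.star_eq]
    simp only [t, mul_sub, sub_mul, mul_smul_comm, smul_mul_assoc, mul_one, one_mul]
    module
  exact sub_nonneg.mp (hsq ▸ star_mul_self_nonneg t)

lemma conj_sub_star_mul_self_le {e f c y : R} (he : IsSelfAdjoint e) (hf : IsSelfAdjoint f)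
    (hef : e * f = 1) (hfe : f * e = 1) (hc : IsSelfAdjoint c) {m M : ℝ}
    (hy : y ≤ (M + m) • c - (m * M) • (e * e)) :
    e * y * e - star (f * c * e) * (f * c * e) ≤ ((M - m) ^ 2 / 4) • (e * e * (e * e)) := by
  set s := f * c * f
  have hs : IsSelfAdjoint s := by
    simp only [s, IsSelfAdjoint, star_mul, hf.star_eq, hc.star_eq, mul_assoc]
  have hee : IsSelfAdjoint (e * e) := by simpa [he.star_eq] using IsSelfAdjoint.star_mul_self e
  -- `c = e s e`, so both terms on the left are conjugates of polynomials in `s` by `e * e`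
  have hcs : c = e * s * e := calc
    c = e * f * c * (f * e) := by rw [hef, hfe, one_mul, mul_one]
    _ = e * s * e := by simp only [s, mul_assoc]
  have hfce : f * c * e = s * (e * e) := by
    rw [hcs, ← mul_assoc f, ← mul_assoc f, hfe, one_mul, mul_assoc]
  calc e * y * e - star (f * c * e) * (f * c * e)
      ≤ e * ((M + m) • c - (m * M) • (e * e)) * e - star (f * c * e) * (f * c * e) :=
        sub_le_sub_right (he.conjugate_le_conjugate hy) _
    _ = (e * e) * ((M + m) • s - (m * M) • 1 - s * s) * (e * e) := by
        rw [hfce, star_mul, hs.star_eq, hee.star_eq, hcs]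
        simp only [mul_sub, sub_mul, mul_smul_comm, smul_mul_assoc, mul_assoc, mul_one]
    _ ≤ (e * e) * (((M - m) ^ 2 / 4) • 1) * (e * e) :=
        hee.conjugate_le_conjugate (smul_sub_smul_one_sub_mul_self_le hs m M)
    _ = ((M - m) ^ 2 / 4) • (e * e * (e * e)) := by
        rw [mul_smul_comm, mul_one, smul_mul_assoc]

end StarOrderedAlgebra

lemma cfc_smul_one {A : Type*} [CStarAlgebra A] (f : ℝ → ℝ) (c : ℝ) :
    cfc f (c • (1 : A)) = f c • 1 := by
  rw [← Algebra.algebraMap_eq_smul_one, cfc_algebraMap, Algebra.algebraMap_eq_smul_one]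

section CStarAlgebra

variable {A : Type*} [CStarAlgebra A] [PartialOrder A] [StarOrderedRing A]

lemma isSelfAdjoint_of_smul_one_le {x : A} {m : ℝ} (h : m • 1 ≤ x) : IsSelfAdjoint x := by
  simpa using (IsSelfAdjoint.of_nonneg (sub_nonneg.mpr h)).add
    ((IsSelfAdjoint.all m).smul (IsSelfAdjoint.one A))

lemma mul_self_le_smul_sub_smul_one {x : A} {m M : ℝ} (hm : m • 1 ≤ x) (hM : x ≤ M • 1) :
    x * x ≤ (M + m) • x - (m * M) • 1 := by
  have hx := isSelfAdjoint_of_smul_one_le hm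
  rw [← Algebra.algebraMap_eq_smul_one] at hm hM
  have hmx := (algebraMap_le_iff_le_spectrum hx).mp hm
  have hxM := (le_algebraMap_iff_spectrum_le hx).mp hM
  have hsq : x * x = cfc (fun t : ℝ => t * t) x := by rw [cfc_mul .., cfc_id' ℝ x]
  have hlin : (M + m) • x - (m * M) • 1 = cfc (fun t : ℝ => (M + m) * t - m * M) x := by
    rw [cfc_sub .., cfc_const_mul_id .., cfc_const .., Algebra.algebraMap_eq_smul_one]
  rw [hsq, hlin]
  refine cfc_mono fun t ht => ?_
  nlinarith [hmx t ht, hxM t ht]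

lemma mul_self_le_sq_smul_one {x : A} (hx : 0 ≤ x) {r : ℝ} (hr : 0 ≤ r) (h : x ≤ r • 1) :
    x * x ≤ r ^ 2 • 1 := calc
  x * x ≤ r • x := by simpa using mul_self_le_smul_sub_smul_one (m := 0) (by simpa using hx) h
  _ ≤ r • r • 1 := smul_le_smul_of_nonneg_left h hr
  _ = r ^ 2 • 1 := by rw [smul_smul, sq]

lemma rpow_half_mul_rpow_half {a : A} (ha : IsStrictlyPositive a) :
    a ^ (1 / 2 : ℝ) * a ^ (1 / 2 : ℝ) = a := by
  rw [← rpow_add ha.isUnit]; norm_num [rpow_one a ha.nonneg]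

lemma rpow_neg_half_mul_rpow_neg_half {a : A} (ha : IsStrictlyPositive a) :
    a ^ (-(1 / 2) : ℝ) * a ^ (-(1 / 2) : ℝ) = a ^ (-1 : ℝ) := by
  rw [← rpow_add ha.isUnit]; norm_num

lemma smul_one_rpow_neg_one {α : ℝ} (hα : 0 ≤ α) : (α • (1 : A)) ^ (-1 : ℝ) = α⁻¹ • 1 := by
  rw [← Algebra.algebraMap_eq_smul_one, rpow_eq_cfc_real (algebraMap_nonneg A hα),
    cfc_algebraMap, Real.rpow_neg_one, Algebra.algebraMap_eq_smul_one]

lemma smul_one_le_rpow_neg_one {a : A} (ha : IsStrictlyPositive a) {α : ℝ} (hα : 0 ≤ α)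
    (h : a ≤ α • 1) : α⁻¹ • 1 ≤ a ^ (-1 : ℝ) :=
  smul_one_rpow_neg_one (A := A) hα ▸ CStarAlgebra.rpow_neg_one_le_rpow_neg_one h ha

lemma rpow_neg_one_le_smul_one {a : A} {α : ℝ} (hα : 0 < α) (h : α • 1 ≤ a) :
    a ^ (-1 : ℝ) ≤ α⁻¹ • 1 :=
  smul_one_rpow_neg_one (A := A) hα.le ▸
    CStarAlgebra.rpow_neg_one_le_rpow_neg_one h (isStrictlyPositive_one.smul hα)

lemma smul_one_le_conj_rpow_neg_half {a b : A} (ha : IsStrictlyPositive a) {α β : ℝ}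
    (hα : 0 ≤ α) (hβ : 0 ≤ β) (haα : a ≤ α • 1) (hb : β • 1 ≤ b) :
    (β * α⁻¹) • 1 ≤ a ^ (-(1 / 2) : ℝ) * b * a ^ (-(1 / 2) : ℝ) := calc
  (β * α⁻¹) • (1 : A) = β • α⁻¹ • 1 := mul_smul ..
  _ ≤ β • a ^ (-1 : ℝ) := smul_le_smul_of_nonneg_left (smul_one_le_rpow_neg_one ha hα haα) hβ
  _ = a ^ (-(1 / 2) : ℝ) * (β • 1) * a ^ (-(1 / 2) : ℝ) := by
    rw [mul_smul_comm, mul_one, smul_mul_assoc, rpow_neg_half_mul_rpow_neg_half ha]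
  _ ≤ a ^ (-(1 / 2) : ℝ) * b * a ^ (-(1 / 2) : ℝ) :=
    IsSelfAdjoint.conjugate_le_conjugate hb rpow_nonneg.isSelfAdjoint

lemma conj_rpow_neg_half_le_smul_one {a b : A} {α β : ℝ} (hα : 0 < α) (hβ : 0 ≤ β)
    (haα : α • 1 ≤ a) (hb : b ≤ β • 1) :
    a ^ (-(1 / 2) : ℝ) * b * a ^ (-(1 / 2) : ℝ) ≤ (β * α⁻¹) • 1 := calc
  a ^ (-(1 / 2) : ℝ) * b * a ^ (-(1 / 2) : ℝ) ≤ a ^ (-(1 / 2) : ℝ) * (β • 1) * a ^ (-(1 / 2) : ℝ) :=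
    IsSelfAdjoint.conjugate_le_conjugate hb rpow_nonneg.isSelfAdjoint
  _ = β • a ^ (-1 : ℝ) := by
    rw [mul_smul_comm, mul_one, smul_mul_assoc,
      rpow_neg_half_mul_rpow_neg_half ((isStrictlyPositive_one.smul hα).of_le haα)]
  _ ≤ β • α⁻¹ • 1 := smul_le_smul_of_nonneg_left (rpow_neg_one_le_smul_one hα haα) hβ
  _ = (β * α⁻¹) • (1 : A) := (mul_smul ..).symm

lemma star_mul_self_rpow_neg_half_mul_conj_le {a x : A} (ha : IsStrictlyPositive a) {m M : ℝ}
    (hm : m • 1 ≤ x) (hM : x ≤ M • 1) :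
    star (a ^ (-(1 / 2) : ℝ) * (a ^ (1 / 2 : ℝ) * x * a ^ (1 / 2 : ℝ))) *
        (a ^ (-(1 / 2) : ℝ) * (a ^ (1 / 2 : ℝ) * x * a ^ (1 / 2 : ℝ))) ≤
      (M + m) • (a ^ (1 / 2 : ℝ) * x * a ^ (1 / 2 : ℝ)) - (m * M) • a := by
  set p := a ^ (1 / 2 : ℝ)
  have hp : IsSelfAdjoint p := rpow_nonneg.isSelfAdjoint
  have hx : IsSelfAdjoint x := isSelfAdjoint_of_smul_one_le hm
  have hqp : a ^ (-(1 / 2) : ℝ) * p = 1 := rpow_neg_mul_rpow _ ha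
  have hcancel : a ^ (-(1 / 2) : ℝ) * (p * x * p) = x * p := by
    rw [← mul_assoc, ← mul_assoc, hqp, one_mul]
  calc star (a ^ (-(1 / 2) : ℝ) * (p * x * p)) * (a ^ (-(1 / 2) : ℝ) * (p * x * p))
      = p * (x * x) * p := by
        rw [hcancel, star_mul, hp.star_eq, hx.star_eq]; simp only [mul_assoc]
    _ ≤ p * ((M + m) • x - (m * M) • 1) * p :=
        hp.conjugate_le_conjugate (mul_self_le_smul_sub_smul_one hm hM)
    _ = (M + m) • (p * x * p) - (m * M) • a := by
        rw [← rpow_half_mul_rpow_half ha]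
        simp only [mul_sub, sub_mul, mul_smul_comm, smul_mul_assoc, mul_one, p]

lemma rpow_half_conj_sub_star_mul_self_le {d c y : A} (hd : IsStrictlyPositive d) {r : ℝ}
    (hr : 0 ≤ r) (hdr : d ≤ r • 1) (hc : IsSelfAdjoint c) {m M : ℝ}
    (hy : y ≤ (M + m) • c - (m * M) • d) :
    d ^ (1 / 2 : ℝ) * y * d ^ (1 / 2 : ℝ) -
        star (d ^ (-(1 / 2) : ℝ) * c * d ^ (1 / 2 : ℝ)) * (d ^ (-(1 / 2) : ℝ) * c * d ^ (1 / 2 : ℝ)) ≤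
      (r ^ 2 / 4 * (M - m) ^ 2) • 1 := by
  have hdd := rpow_half_mul_rpow_half hd
  calc _ ≤ ((M - m) ^ 2 / 4) • (d * d) := by
        have := conj_sub_star_mul_self_le rpow_nonneg.isSelfAdjoint
          rpow_nonneg.isSelfAdjoint (rpow_mul_rpow_neg _ hd) (rpow_neg_mul_rpow _ hd) hc
          (hdd ▸ hy)
        rwa [hdd] at this
    _ ≤ ((M - m) ^ 2 / 4) • r ^ 2 • 1 :=
        smul_le_smul_of_nonneg_left (mul_self_le_sq_smul_one hd.nonneg hr hdr) (by positivity)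
    _ = (r ^ 2 / 4 * (M - m) ^ 2) • (1 : A) := by rw [smul_smul]; ring_nf

end CStarAlgebra

namespace PositiveLinearMap

lemma map_isSelfAdjoint {A₁ A₂ : Type*} [NonUnitalCStarAlgebra A₁] [PartialOrder A₁]
    [StarOrderedRing A₁] [NonUnitalRing A₂] [StarRing A₂] [PartialOrder A₂] [StarOrderedRing A₂]
    [Module ℂ A₂] (φ : A₁ →ₚ[ℂ] A₂) {x : A₁} (hx : IsSelfAdjoint x) :
    IsSelfAdjoint (φ x) := by
  rw [← posPart_sub_negPart x hx, map_sub]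
  exact (IsSelfAdjoint.of_nonneg (φ.map_nonneg (posPart_nonneg x))).sub
    (.of_nonneg (φ.map_nonneg (negPart_nonneg x)))

lemma apply_le_smul_one {A₁ A₂ : Type*} [CStarAlgebra A₁] [PartialOrder A₁] [StarOrderedRing A₁]
    [CStarAlgebra A₂] [PartialOrder A₂] [StarOrderedRing A₂] (φ : A₁ →ₚ[ℂ] A₂) (hφ : φ 1 ≤ 1)
    {x : A₁} {r : ℝ} (hr : 0 ≤ r) (h : x ≤ r • 1) : φ x ≤ r • 1 := calc
  φ x ≤ φ (r • 1) := φ.monotone' h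
  _ = r • φ 1 := map_smul_of_tower φ r 1
  _ ≤ r • 1 := smul_le_smul_of_nonneg_left hφ hr

end PositiveLinearMap

section HilbertSpace

variable {H : Type} [NormedAddCommGroup H] [InnerProductSpace ℂ H] [CompleteSpace H]

lemma opPow_eq_rpow {a : H →L[ℂ] H} (ha : 0 ≤ a) (r : ℝ) : opPow a r = a ^ r :=
  (rpow_eq_cfc_real ha).symm

lemma IsOperatorMonotone.apply_smul_one_le_cfc {f : ℝ → ℝ} (hf : IsOperatorMonotone f)
    {x : H →L[ℂ] H} {c : ℝ} (hc : 0 < c) (h : c • 1 ≤ x) : f c • 1 ≤ cfc f x := by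
  have hc1 : IsStrictlyPositive (c • (1 : H →L[ℂ] H)) := isStrictlyPositive_one.smul hc
  have hx := hc1.of_le h
  simpa only [cfc_smul_one] using hf H _ _ hc1.nonneg hc1.isUnit hx.nonneg hx.isUnit h

lemma IsOperatorMonotone.cfc_le_apply_smul_one {f : ℝ → ℝ} (hf : IsOperatorMonotone f)
    {x : H →L[ℂ] H} (hx : IsStrictlyPositive x) {c : ℝ} (hc : 0 < c) (h : x ≤ c • 1) :
    cfc f x ≤ f c • 1 := by
  have hc1 : IsStrictlyPositive (c • (1 : H →L[ℂ] H)) := isStrictlyPositive_one.smul hc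
  simpa only [cfc_smul_one] using hf H _ _ hx.nonneg hx.isUnit hc1.nonneg hc1.isUnit h

lemma opMean_isSelfAdjoint (f : ℝ → ℝ) (a b : H →L[ℂ] H) : IsSelfAdjoint (opMean f a b) :=
  IsSelfAdjoint.conjugate_self (cfc_predicate (R := ℝ) f _) (cfc_predicate _ a)

lemma star_mul_self_opPow_neg_half_mul_opMean_le {f : ℝ → ℝ} (hf : IsOperatorMonotone f)
    {a b : H →L[ℂ] H} {a₁ b₁ a₂ b₂ : ℝ} (ha₁ : 0 < a₁) (hb₁ : 0 < b₁) (ha₂ : 0 < a₂)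
    (hb₂ : 0 < b₂) (ha_ge : b₁ • 1 ≤ a) (ha_le : a ≤ a₁ • 1) (hb_ge : b₂ • 1 ≤ b)
    (hb_le : b ≤ a₂ • 1) :
    star (opPow a (-(1 / 2)) * opMean f a b) * (opPow a (-(1 / 2)) * opMean f a b) ≤
      (f (a₂ * b₁⁻¹) + f (b₂ * a₁⁻¹)) • opMean f a b - (f (b₂ * a₁⁻¹) * f (a₂ * b₁⁻¹)) • a := by
  have ha : IsStrictlyPositive a := (isStrictlyPositive_one.smul hb₁).of_le ha_ge
  have hT₁ := smul_one_le_conj_rpow_neg_half ha ha₁.le hb₂.le ha_le hb_ge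
  have hT₂ := conj_rpow_neg_half_le_smul_one hb₁ ha₂.le ha_ge hb_le
  have hT := (isStrictlyPositive_one.smul (by positivity)).of_le hT₁
  simp only [opMean, opPow_eq_rpow ha.nonneg]
  exact star_mul_self_rpow_neg_half_mul_conj_le ha
    (hf.apply_smul_one_le_cfc (by positivity) hT₁) (hf.cfc_le_apply_smul_one hT (by positivity) hT₂)

end HilbertSpace

theorem stmt_11_general {H K : Type} [NormedAddCommGroup H] [InnerProductSpace ℂ H] [CompleteSpace H]
    [NormedAddCommGroup K] [InnerProductSpace ℂ K] [CompleteSpace K]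
    (Φ : (H →L[ℂ] H) →ₗ[ℂ] (K →L[ℂ] K))
    (hΦ : ∀ X : H →L[ℂ] H, 0 ≤ X → 0 ≤ Φ X)
    (hΦu : ∀ X : H →L[ℂ] H, 0 ≤ X → IsUnit X → IsUnit (Φ X))
    (hΦ1 : Φ 1 ≤ 1)
    (A B : H →L[ℂ] H) (a₁ b₁ a₂ b₂ : ℝ)
    (hb₁ : 0 < b₁) (hb₂ : 0 < b₂)
    (hA₁ : b₁ • (1 : H →L[ℂ] H) ≤ A) (hA₂ : A ≤ a₁ • (1 : H →L[ℂ] H))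
    (hB₁ : b₂ • (1 : H →L[ℂ] H) ≤ B) (hB₂ : B ≤ a₂ • (1 : H →L[ℂ] H))
    (f : ℝ → ℝ)
    (hf_mono : IsOperatorMonotone f) :
    opPow (Φ A) (1/2) *
          Φ (star (opPow A (-(1/2)) * opMean f A B) * (opPow A (-(1/2)) * opMean f A B)) *
          opPow (Φ A) (1/2) -
        star (opPow (Φ A) (-(1/2)) * Φ (opMean f A B) * opPow (Φ A) (1/2)) *
          (opPow (Φ A) (-(1/2)) * Φ (opMean f A B) * opPow (Φ A) (1/2)) ≤
      (a₁ ^ 2 / 4 * (f (a₂ * b₁⁻¹) - f (b₂ * a₁⁻¹)) ^ 2) • (1 : K →L[ℂ] K) := by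
  rcases subsingleton_or_nontrivial H with hH | hH
  · have hΦ0 : ∀ X, Φ X = 0 := fun X => by rw [Subsingleton.elim X 0, map_zero]
    simpa [hΦ0] using smul_nonneg (by positivity) zero_le_one
  let Ψ := PositiveLinearMap.mk₀ Φ hΦ
  have hA : IsStrictlyPositive A := (isStrictlyPositive_one.smul hb₁).of_le hA₁
  have hD : IsStrictlyPositive (Φ A) := ⟨hΦ A hA.nonneg, hΦu A hA.nonneg hA.isUnit⟩
  have ha₁ : 0 < a₁ := hb₁.trans_le (by simpa using hA₁.trans hA₂)
  have ha₂ : 0 < a₂ := hb₂.trans_le (by simpa using hB₁.trans hB₂)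
  have hY : Φ (star (opPow A (-(1 / 2)) * opMean f A B) * (opPow A (-(1 / 2)) * opMean f A B)) ≤
      (f (a₂ * b₁⁻¹) + f (b₂ * a₁⁻¹)) • Φ (opMean f A B) -
        (f (b₂ * a₁⁻¹) * f (a₂ * b₁⁻¹)) • Φ A := by
    have h := OrderHomClass.mono Ψ
      (star_mul_self_opPow_neg_half_mul_opMean_le hf_mono ha₁ hb₁ ha₂ hb₂ hA₁ hA₂ hB₁ hB₂)
    rwa [map_sub, Ψ.map_smul_of_tower, Ψ.map_smul_of_tower] at h
  simp only [opPow_eq_rpow hD.nonneg]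
  exact rpow_half_conj_sub_star_mul_self_le hD ha₁.le (Ψ.apply_le_smul_one hΦ1 ha₁.le hA₂)
    (Ψ.map_isSelfAdjoint (opMean_isSelfAdjoint f A B)) hY

/-- **Generalized Ozeki–Izumino–Mori–Seo type inequality (Theorem 3.10).** -/
theorem stmt_11 {H K : Type} [NormedAddCommGroup H] [InnerProductSpace ℂ H] [CompleteSpace H]
    [NormedAddCommGroup K] [InnerProductSpace ℂ K] [CompleteSpace K]
    (Φ : (H →L[ℂ] H) →ₗ[ℂ] (K →L[ℂ] K))
    (hΦ : ∀ X : H →L[ℂ] H, 0 ≤ X → 0 ≤ Φ X)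
    (hΦu : ∀ X : H →L[ℂ] H, 0 ≤ X → IsUnit X → IsUnit (Φ X))
    (hΦ1 : Φ 1 ≤ 1)
    (A B : H →L[ℂ] H) (a₁ b₁ a₂ b₂ : ℝ)
    (hb₁ : 0 < b₁) (hb₂ : 0 < b₂)
    (hA₁ : b₁ • (1 : H →L[ℂ] H) ≤ A) (hA₂ : A ≤ a₁ • (1 : H →L[ℂ] H))
    (hB₁ : b₂ • (1 : H →L[ℂ] H) ≤ B) (hB₂ : B ≤ a₂ • (1 : H →L[ℂ] H))
    (f : ℝ → ℝ) (hf_pos : ∀ x : ℝ, 0 < x → 0 < f x) (hf_one : f 1 = 1)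
    (hf_mono : IsOperatorMonotone f) :
    opPow (Φ A) (1/2) *
          Φ (star (opPow A (-(1/2)) * opMean f A B) * (opPow A (-(1/2)) * opMean f A B)) *
          opPow (Φ A) (1/2) -
        star (opPow (Φ A) (-(1/2)) * Φ (opMean f A B) * opPow (Φ A) (1/2)) *
          (opPow (Φ A) (-(1/2)) * Φ (opMean f A B) * opPow (Φ A) (1/2)) ≤
      (a₁ ^ 2 / 4 * (f (a₂ * b₁⁻¹) - f (b₂ * a₁⁻¹)) ^ 2) • (1 : K →L[ℂ] K) :=
  stmt_11_general Φ hΦ hΦu hΦ1 A B a₁ b₁ a₂ b₂ hb₁ hb₂ hA₁ hA₂ hB₁ hB₂ f hf_mono
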